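/- Let Γ ⊆ L^Q_Pr be finite and suppose the set E[Γ] of its events can be written as Θ₁ ∪ … ∪ Θ_n where every formula in E[Γ] is a conjunction of propositional variables or a disjunction of propositional variables, any two formulas in the same Θ_i are comparable with respect to ⊨_CPL, and the variable sets Var[Θ_i] are pairwise disjoint. Then the Łukasiewicz theory Ψ_Γ = Γ^↑ ∪ {p_φ → p_χ : φ, χ ∈ E[Γ] and φ ⊨_CPL χ} is Ł-satisfiable if and only if Γ is FP-satisfiable. -/
import Mathlib


open scoped Classical

/-- Classical propositional formulas (the language `L_CPL`), built from
propositional variables (indexed by `ℕ`) using ¬, ∧, ∨. -/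
inductive CPL where
  | var : ℕ → CPL
  | neg : CPL → CPL
  | and : CPL → CPL → CPL
  | or : CPL → CPL → CPL
deriving DecidableEq

namespace CPL

/-- The set of propositional variables occurring in a formula. -/
def vars : CPL → Finset ℕ
  | var p => {p}
  | neg φ => vars φ
  | and φ χ => vars φ ∪ vars χ
  | or φ χ => vars φ ∪ vars χ

/-- Classical evaluation of a formula under a Boolean valuation. -/
def eval (v : ℕ → Bool) : CPL → Bool
  | var p => v p
  | neg φ => !eval v φ
  | and φ χ => eval v φ && eval v χ
  | or φ χ => eval v φ || eval v χ

/-- Evaluation of a formula at a state given as a set of variables: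
the variables in `X` are true, all others false. -/
def evalSet (X : Finset ℕ) (φ : CPL) : Bool := eval (fun p => decide (p ∈ X)) φ

/-- CPL-satisfiability. -/
def Satisfiable (φ : CPL) : Prop := ∃ v, eval v φ = true

/-- CPL-validity. -/
def Valid (φ : CPL) : Prop := ∀ v, eval v φ = true

/-- Classical entailment `φ ⊨_CPL χ`. -/
def Entails (φ χ : CPL) : Prop := ∀ v, eval v φ = true → eval v χ = true

/-- A literal: a variable or a negated variable. -/
def IsLiteral (φ : CPL) : Prop := (∃ p, φ = var p) ∨ ∃ p, φ = neg (var p)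

/-- An `L_CPL`-term: a conjunction of literals. -/
inductive IsTerm : CPL → Prop
  | lit {φ} : IsLiteral φ → IsTerm φ
  | conj {φ χ} : IsTerm φ → IsTerm χ → IsTerm (and φ χ)

/-- A conjunction of propositional variables. -/
inductive IsConjVars : CPL → Prop
  | var (p : ℕ) : IsConjVars (var p)
  | conj {φ χ} : IsConjVars φ → IsConjVars χ → IsConjVars (and φ χ)

/-- A disjunction of propositional variables. -/
inductive IsDisjVars : CPL → Prop
  | var (p : ℕ) : IsDisjVars (var p)
  | disj {φ χ} : IsDisjVars φ → IsDisjVars χ → IsDisjVars (or φ χ)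

/-- Variables occurring as positive literals (in a term). -/
def posVars : CPL → Finset ℕ
  | var p => {p}
  | neg _ => ∅
  | and φ χ => posVars φ ∪ posVars χ
  | or _ _ => ∅

/-- Variables occurring as negated literals (in a term). -/
def negVars : CPL → Finset ℕ
  | var _ => ∅
  | neg (var p) => {p}
  | neg _ => ∅
  | and φ χ => negVars φ ∪ negVars χ
  | or _ _ => ∅

/-- The literals occurring in a term. -/
def lits (φ : CPL) : Finset CPL :=
  (posVars φ).image var ∪ (negVars φ).image (fun p => neg (var p))

end CPL

/-- A state (possible world) over a finite set `V` of variables: a subset of `V`. -/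
abbrev World (V : Finset ℕ) := {X : Finset ℕ // X ⊆ V}

/-- A probabilistic model for `V`: a finitely additive probability measure
`μ : 2^(2^V) → [0,1]`. -/
structure ProbModel (V : Finset ℕ) where
  μ : Set (World V) → ℝ
  nonneg : ∀ A, 0 ≤ μ A
  le_one : ∀ A, μ A ≤ 1
  m_univ : μ Set.univ = 1
  m_empty : μ ∅ = 0
  m_add : ∀ A B : Set (World V), Disjoint A B → μ (A ∪ B) = μ A + μ B

/-- The truth set `‖φ‖_M` of a classical formula in a probabilistic model for `V`. -/
def truthSet (V : Finset ℕ) (φ : CPL) : Set (World V) :=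
  {w | CPL.evalSet w.1 φ = true}

/-- Comparison symbols ◇ ∈ {≤, <, >, ≥}. -/
inductive Ineq where
  | le | lt | gt | ge
deriving DecidableEq

/-- The relation denoted by a comparison symbol. -/
def Ineq.holds : Ineq → ℝ → ℝ → Prop
  | le, x, c => x ≤ c
  | lt, x, c => x < c
  | gt, x, c => x > c
  | ge, x, c => x ≥ c

/-- Formulas of the probabilistic language `L^Q_Pr`, built from probabilistic atoms
`Pr(φ)` and `Pr(φ)◇c̄` using ¬, △, ⊙, ⊕, →. -/
inductive FP where
  | prob : CPL → FP
  | probIneq : CPL → Ineq → ℚ → FP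
  | neg : FP → FP
  | delta : FP → FP
  | conj : FP → FP → FP
  | disj : FP → FP → FP
  | impl : FP → FP → FP
deriving DecidableEq

namespace FP

/-- Well-formedness: all rational constants lie in `[0,1] ∩ ℚ`. -/
def WF : FP → Prop
  | prob _ => True
  | probIneq _ _ c => 0 ≤ c ∧ c ≤ 1
  | neg α => WF α
  | delta α => WF α
  | conj α β => WF α ∧ WF β
  | disj α β => WF α ∧ WF β
  | impl α β => WF α ∧ WF β

/-- The variables of an `L^Q_Pr`-formula. -/
def vars : FP → Finset ℕ
  | prob φ => φ.vars
  | probIneq φ _ _ => φ.vars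
  | neg α => vars α
  | delta α => vars α
  | conj α β => vars α ∪ vars β
  | disj α β => vars α ∪ vars β
  | impl α β => vars α ∪ vars β

/-- The events `E(α)`: the classical formulas occurring in probabilistic atoms of `α`. -/
def events : FP → Finset CPL
  | prob φ => {φ}
  | probIneq φ _ _ => {φ}
  | neg α => events α
  | delta α => events α
  | conj α β => events α ∪ events β
  | disj α β => events α ∪ events β
  | impl α β => events α ∪ events β

/-- The FP-interpretation `I_M` induced by a probabilistic model `M`. -/
noncomputable def interp {V : Finset ℕ} (M : ProbModel V) : FP → ℝ
  | prob φ => M.μ (truthSet V φ)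
  | probIneq φ d c => if d.holds (M.μ (truthSet V φ)) (c : ℝ) then 1 else 0
  | neg α => 1 - interp M α
  | delta α => if interp M α = 1 then 1 else 0
  | conj α β => max 0 (interp M α + interp M β - 1)
  | disj α β => min 1 (interp M α + interp M β)
  | impl α β => min 1 (1 - interp M α + interp M β)

/-- `α` is FP-satisfiable: `I_M(α) = 1` in some probabilistic model for `Var(α)`. -/
def Satisfiable (α : FP) : Prop := ∃ M : ProbModel α.vars, interp M α = 1

/-- `α` is FP-valid: `I_M(α) = 1` in every probabilistic model for `Var(α)`. -/
def Valid (α : FP) : Prop := ∀ M : ProbModel α.vars, interp M α = 1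

/-- `α ⊨_FP β`: `I_M(β) = 1` in every probabilistic model for the variables of
`{α, β}` with `I_M(α) = 1`. -/
def Entails1 (α β : FP) : Prop :=
  ∀ M : ProbModel (α.vars ∪ β.vars), interp M α = 1 → interp M β = 1

/-- The variables of a finite set of `L^Q_Pr`-formulas. -/
def varsSet (Γ : Finset FP) : Finset ℕ := Γ.sup vars

/-- A finite set `Γ` is FP-satisfiable (`Γ ⊭_FP ⊥`): some probabilistic model for
the variables of `Γ` makes every member of `Γ` equal to `1`. -/
def SetSatisfiable (Γ : Finset FP) : Prop :=
  ∃ M : ProbModel (varsSet Γ), ∀ γ ∈ Γ, interp M γ = 1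

/-- `Γ ⊨_FP δ`: every probabilistic model for the variables of `Γ ∪ {δ}` satisfying
all of `Γ` satisfies `δ`. -/
def EntailsFin (Γ : Finset FP) (δ : FP) : Prop :=
  ∀ M : ProbModel (varsSet Γ ∪ δ.vars), (∀ γ ∈ Γ, interp M γ = 1) → interp M δ = 1

/-- `Γ ⊨^cons_FP δ`: `Γ ⊨_FP δ` and `Γ ⊭_FP ⊥`. -/
def ConsEntails (Γ : Finset FP) (δ : FP) : Prop :=
  EntailsFin Γ δ ∧ SetSatisfiable Γ

/-- The set of permitted values `V_Pr(Pr(φ)◇c̄)`. -/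
def permittedValues (φ : CPL) (d : Ineq) (c : ℚ) : Set ℝ :=
  {x | ∃ (V : Finset ℕ) (M : ProbModel V), φ.vars ⊆ V ∧
      interp M (probIneq φ d c) = 1 ∧ M.μ (truthSet V φ) = x}

end FP

/-- Formulas of the Łukasiewicz language `L^Q_Ł`, built from propositional variables
and truth-constant literals `p◇c̄` using ¬, △, ⊙, ⊕, →. -/
inductive Luk where
  | var : ℕ → Luk
  | ineq : ℕ → Ineq → ℚ → Luk
  | neg : Luk → Luk
  | delta : Luk → Luk
  | conj : Luk → Luk → Luk
  | disj : Luk → Luk → Luk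
  | impl : Luk → Luk → Luk
deriving DecidableEq

/-- An Ł-valuation: a function `Var → [0,1]`. -/
structure LukVal where
  v : ℕ → ℝ
  mem : ∀ p, v p ∈ Set.Icc (0 : ℝ) 1

/-- Extension of an Ł-valuation to all `L^Q_Ł`-formulas. -/
noncomputable def LukVal.eval (val : LukVal) : Luk → ℝ
  | .var p => val.v p
  | .ineq p d c => if d.holds (val.v p) (c : ℝ) then 1 else 0
  | .neg φ => 1 - val.eval φ
  | .delta φ => if val.eval φ = 1 then 1 else 0
  | .conj φ χ => max 0 (val.eval φ + val.eval χ - 1)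
  | .disj φ χ => min 1 (val.eval φ + val.eval χ)
  | .impl φ χ => min 1 (1 - val.eval φ + val.eval χ)

namespace Luk

/-- Well-formedness: all rational constants lie in `[0,1] ∩ ℚ`. -/
def WF : Luk → Prop
  | var _ => True
  | ineq _ _ c => 0 ≤ c ∧ c ≤ 1
  | neg φ => WF φ
  | delta φ => WF φ
  | conj φ χ => WF φ ∧ WF χ
  | disj φ χ => WF φ ∧ WF χ
  | impl φ χ => WF φ ∧ WF χ

/-- `Φ ⊨_Ł χ` for a finite set `Φ`. -/
def EntailsFin (Φ : Finset Luk) (χ : Luk) : Prop :=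
  ∀ val : LukVal, (∀ φ ∈ Φ, val.eval φ = 1) → val.eval χ = 1

/-- `φ` is Ł-valid. -/
def ValidL (φ : Luk) : Prop := ∀ val : LukVal, val.eval φ = 1

/-- A set of `L^Q_Ł`-formulas is Ł-satisfiable. -/
def SatisfiableSet (S : Set Luk) : Prop := ∃ val : LukVal, ∀ φ ∈ S, val.eval φ = 1

/-- The probabilistic counterpart `φ^Pr` of a Łukasiewicz formula. -/
def toFP : Luk → FP
  | var p => .prob (.var p)
  | ineq p d c => .probIneq (.var p) d c
  | neg φ => .neg (toFP φ)
  | delta φ => .delta (toFP φ)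
  | conj φ χ => .conj (toFP φ) (toFP χ)
  | disj φ χ => .disj (toFP φ) (toFP χ)
  | impl φ χ => .impl (toFP φ) (toFP χ)

end Luk

namespace FP

/-- The outer counterpart `α^↑` of an `L^Q_Pr`-formula, replacing each atom `Pr(φ)`
by the fresh variable `e φ` (and `Pr(φ)◇c̄` by `(e φ)◇c̄`). -/
def outer (e : CPL → ℕ) : FP → Luk
  | prob φ => .var (e φ)
  | probIneq φ d c => .ineq (e φ) d c
  | neg α => .neg (outer e α)
  | delta α => .delta (outer e α)
  | conj α β => .conj (outer e α) (outer e β)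
  | disj α β => .disj (outer e α) (outer e β)
  | impl α β => .impl (outer e α) (outer e β)

end FP

/-- The ⊙-conjunction of a (nonempty) list of `L^Q_Pr`-formulas. -/
def bigConjFP : List FP → FP
  | [] => .probIneq (.var 0) .ge 0
  | a :: t => t.foldl .conj a

/-- The ∨-disjunction of a (nonempty) list of classical formulas. -/
def bigDisjCPL : List CPL → CPL
  | [] => .var 0
  | a :: t => t.foldl .or a

/-- The PIT `⊙_i Pr(τ_i)≤c̄_i ⊙ ⊙_i Pr(τ_i)≥c̄_i` associated with the list of
pairs `(τ_i, c_i)`. -/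
def completePITFormula (L : List (CPL × ℚ)) : FP :=
  bigConjFP (L.map (fun t => FP.probIneq t.1 .le t.2) ++
             L.map (fun t => FP.probIneq t.1 .ge t.2))

/-- `τ` is an `L_CPL`-term containing, for every `p ∈ V`, exactly one of the
literals `p` and `¬p` (and no other variables). -/
def IsCompleteTermOver (V : Finset ℕ) (τ : CPL) : Prop :=
  CPL.IsTerm τ ∧ τ.vars ⊆ V ∧ ∀ p ∈ V, (p ∈ τ.posVars ↔ p ∉ τ.negVars)

/-- Membership in `𝒱 = {0, 1/n, …, (n−1)/n, 1}`. -/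
def memVSet (n : ℕ) (c : ℚ) : Prop := ∃ k : ℕ, k ≤ n ∧ c = (k : ℚ) / (n : ℚ)

/-- The data `(τ_i, c_i)` of a `⟨V,𝒱⟩`-complete PIT (with `𝒱` given by `n`). -/
def IsCompletePIT (V : Finset ℕ) (n : ℕ) (L : List (CPL × ℚ)) : Prop :=
  (L.map Prod.fst).Nodup ∧
  (∀ t ∈ L, IsCompleteTermOver V t.1 ∧ memVSet n t.2) ∧
  (L.map Prod.snd).sum = 1

/-- A measure is coherent with a value assignment `pr` on the events `E`. -/
def coherent {V : Finset ℕ} (M : ProbModel V) (E : Finset CPL) (pr : CPL → ℚ) : Prop :=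
  ∀ ψ ∈ E, M.μ (truthSet V ψ) = (pr ψ : ℝ)

/-- Conditional probability `Pr_μ(φ | χ) = μ(‖φ∧χ‖)/μ(‖χ‖)`. -/
noncomputable def condProb {V : Finset ℕ} (M : ProbModel V) (φ χ : CPL) : ℝ :=
  M.μ (truthSet V (CPL.and φ χ)) / M.μ (truthSet V χ)

/-- `τ` is a solution to the PrAP `⟨{φ}, χ, H, E, pr⟩`: an `L_CPL`-term composed of
literals from `H` s.t. `φ, τ ⊨_CPL χ` and some probabilistic model coherent with `pr`
gives `μ(‖φ∧τ‖) > 0`. -/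
def IsPrAPSolution (φ χ : CPL) (H E : Finset CPL) (pr : CPL → ℚ) (τ : CPL) : Prop :=
  CPL.IsTerm τ ∧ τ.lits ⊆ H ∧
  (∀ v, CPL.eval v φ = true → CPL.eval v τ = true → CPL.eval v χ = true) ∧
  ∃ M : ProbModel (φ.vars ∪ χ.vars),
    coherent M E pr ∧ 0 < M.μ (truthSet (φ.vars ∪ χ.vars) (CPL.and φ τ))

/-- `τ` is a preferred solution: a solution s.t. for every other solution `σ` there is
a probabilistic model coherent with `pr` with `μ(‖τ‖) ≥ μ(‖σ‖)`. -/
def IsPreferredPrAPSolution (φ χ : CPL) (H E : Finset CPL) (pr : CPL → ℚ) (τ : CPL) : Prop :=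
  IsPrAPSolution φ χ H E pr τ ∧
  ∀ σ, IsPrAPSolution φ χ H E pr σ → σ ≠ τ →
    ∃ M : ProbModel (φ.vars ∪ χ.vars),
      coherent M E pr ∧
      M.μ (truthSet (φ.vars ∪ χ.vars) σ) ≤ M.μ (truthSet (φ.vars ∪ χ.vars) τ)

/-- The FP-counterpart `Ξ_p = {Pr(ψ)≈c̄ : ψ ∈ E, p(ψ) = c}` of a value assignment,
where `Pr(ψ)≈c̄` abbreviates `(Pr(ψ)≥c̄) ⊙ (Pr(ψ)≤c̄)`. -/
def XiP (E : Finset CPL) (pr : CPL → ℚ) : Finset FP :=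
  E.image (fun ψ => FP.conj (FP.probIneq ψ .ge (pr ψ)) (FP.probIneq ψ .le (pr ψ)))

/-- The next weakest PIL `λ^♭_𝒱` of the PIL `Pr(τ)◇(k/n)`. -/
def flatPIL (n : ℕ) (τ : CPL) (d : Ineq) (k : ℕ) : FP :=
  match d with
  | .ge => FP.probIneq τ .gt (((k : ℚ) - 1) / (n : ℚ))
  | .gt => FP.probIneq τ .ge ((k : ℚ) / (n : ℚ))
  | .le => FP.probIneq τ .lt (((k : ℚ) + 1) / (n : ℚ))
  | .lt => FP.probIneq τ .le ((k : ℚ) / (n : ℚ))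

/-- The theory `Ψ_Γ = Γ^↑ ∪ {p_φ → p_χ : φ, χ ∈ E[Γ], φ ⊨_CPL χ}`. -/
def PsiGamma (Γ : Finset FP) (e : CPL → ℕ) : Set Luk :=
  (fun α => FP.outer e α) '' (↑Γ : Set FP) ∪
  {ψ | ∃ φ ∈ Γ.sup FP.events, ∃ χ ∈ Γ.sup FP.events,
        CPL.Entails φ χ ∧ ψ = Luk.impl (.var (e φ)) (.var (e χ))}

/-- The conjunction `hd ∧ ⋀_{q ∈ s} q`. -/
def conjVarsFrom (hd : CPL) (s : Finset ℕ) : CPL :=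
  (s.sort (· ≤ ·)).foldl (fun acc q => CPL.and acc (CPL.var q)) hd
namespace CPL

lemma eval_congr (φ : CPL) : ∀ (v v' : ℕ → Bool), (∀ p ∈ φ.vars, v p = v' p) →
    eval v φ = eval v' φ := by
  induction φ with
  | var p => intro v v' h; exact h p (by simp [vars])
  | neg φ ih => intro v v' h; simp [eval, ih v v' h]
  | and φ χ ih1 ih2 =>
      intro v v' h
      simp only [eval]
      rw [ih1 v v' (fun p hp => h p (by simp [vars, hp])),
          ih2 v v' (fun p hp => h p (by simp [vars, hp]))]
  | or φ χ ih1 ih2 =>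
      intro v v' h
      simp only [eval]
      rw [ih1 v v' (fun p hp => h p (by simp [vars, hp])),
          ih2 v v' (fun p hp => h p (by simp [vars, hp]))]

lemma eval_conjVars {φ : CPL} (h : IsConjVars φ) (v : ℕ → Bool) :
    eval v φ = true ↔ ∀ p ∈ φ.vars, v p = true := by
  induction h with
  | var p => simp [eval, vars]
  | conj h1 h2 ih1 ih2 =>
      simp only [eval, Bool.and_eq_true, ih1, ih2, vars, Finset.mem_union]
      constructor
      · rintro ⟨a, b⟩ p (hp | hp); exacts [a p hp, b p hp]
      · intro h; exact ⟨fun p hp => h p (Or.inl hp), fun p hp => h p (Or.inr hp)⟩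

lemma eval_disjVars {φ : CPL} (h : IsDisjVars φ) (v : ℕ → Bool) :
    eval v φ = true ↔ ∃ p ∈ φ.vars, v p = true := by
  induction h with
  | var p => simp [eval, vars]
  | disj h1 h2 ih1 ih2 =>
      simp only [eval, Bool.or_eq_true, ih1, ih2, vars, Finset.mem_union]
      constructor
      · rintro (⟨p, hp, hv⟩ | ⟨p, hp, hv⟩)
        exacts [⟨p, Or.inl hp, hv⟩, ⟨p, Or.inr hp, hv⟩]
      · rintro ⟨p, (hp | hp), hv⟩
        exacts [Or.inl ⟨p, hp, hv⟩, Or.inr ⟨p, hp, hv⟩]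

lemma vars_nonempty_of_conj {φ : CPL} (h : IsConjVars φ) : φ.vars.Nonempty := by
  induction h with
  | var p => exact ⟨p, by simp [vars]⟩
  | conj h1 h2 ih1 ih2 => exact ih1.mono (by simp [vars, Finset.subset_union_left])

lemma vars_nonempty_of_disj {φ : CPL} (h : IsDisjVars φ) : φ.vars.Nonempty := by
  induction h with
  | var p => exact ⟨p, by simp [vars]⟩
  | disj h1 h2 ih1 ih2 => exact ih1.mono (by simp [vars, Finset.subset_union_left])

lemma Entails.refl (φ : CPL) : Entails φ φ := fun _ h => h

lemma Entails.trans {φ χ ψ : CPL} (h1 : Entails φ χ) (h2 : Entails χ ψ) : Entails φ ψ :=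
  fun v h => h2 v (h1 v h)

/-- disj entails disj implies vars subset -/
lemma disj_entails_disj {φ χ : CPL} (hφ : IsDisjVars φ) (hχ : IsDisjVars χ)
    (h : Entails φ χ) : φ.vars ⊆ χ.vars := by
  intro q hq
  have h1 : eval (fun r => decide (r = q)) φ = true := by
    rw [eval_disjVars hφ]; exact ⟨q, hq, by simp⟩
  have h2 := h _ h1
  rw [eval_disjVars hχ] at h2
  obtain ⟨p, hp, hv⟩ := h2
  simp only [decide_eq_true_eq] at hv
  exact hv ▸ hp

lemma disj_entails_disj_of_subset {φ χ : CPL} (hφ : IsDisjVars φ) (hχ : IsDisjVars χ)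
    (h : φ.vars ⊆ χ.vars) : Entails φ χ := by
  intro v hv
  rw [eval_disjVars hφ] at hv
  rw [eval_disjVars hχ]
  obtain ⟨p, hp, hv⟩ := hv
  exact ⟨p, h hp, hv⟩

end CPL
namespace CPL

lemma not_entails {φ χ : CPL} (h : ¬ Entails φ χ) :
    ∃ v, eval v φ = true ∧ eval v χ ≠ true := by
  simpa [Entails, not_forall] using h

lemma evalSet_false_iff (w : Finset ℕ) (χ : CPL) :
    evalSet w χ = false ↔ ¬ evalSet w χ = true := Bool.eq_false_iff

lemma exists_world_min (Θ : Finset CPL) (hform : ∀ φ ∈ Θ, IsConjVars φ ∨ IsDisjVars φ)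
    (hchain : ∀ φ ∈ Θ, ∀ χ ∈ Θ, Entails φ χ ∨ Entails χ φ)
    (ψ : CPL) (hψ : ψ ∈ Θ) :
    ∃ w : Finset ℕ, w ⊆ Θ.sup CPL.vars ∧ CPL.evalSet w ψ = true ∧
      ∀ χ ∈ Θ, ¬ Entails ψ χ → CPL.evalSet w χ = false := by
  rcases hform ψ hψ with hc | hd
  · -- ψ conjunction of variables
    refine ⟨ψ.vars, Finset.le_sup hψ, ?_, ?_⟩
    · rw [evalSet, eval_conjVars hc]; intro p hp; simpa using hp
    · intro χ hχ hn
      obtain ⟨v, hv1, hv2⟩ := not_entails hn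
      have hvψ : ∀ p ∈ ψ.vars, v p = true := (eval_conjVars hc v).mp hv1
      rw [evalSet_false_iff]
      rcases hform χ hχ with hcχ | hdχ
      · rw [evalSet, eval_conjVars hcχ]
        intro hall
        apply hv2
        rw [eval_conjVars hcχ]
        intro q hq
        have := hall q hq
        simp only [decide_eq_true_eq] at this
        exact hvψ q this
      · rw [evalSet, eval_disjVars hdχ]
        rintro ⟨q, hq, hqv⟩
        simp only [decide_eq_true_eq] at hqv
        apply hv2
        rw [eval_disjVars hdχ]
        exact ⟨q, hq, hvψ q hqv⟩
  · -- ψ disjunction of variables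
    have key : ∃ p ∈ ψ.vars,
        (∀ χ ∈ Θ, IsDisjVars χ → ¬ Entails ψ χ → p ∉ χ.vars) ∧
        (∀ χ ∈ Θ, IsConjVars χ → ¬ Entails ψ χ → χ.vars ≠ {p}) := by
      classical
      set D := Θ.filter (fun χ => IsDisjVars χ ∧ ¬ Entails ψ χ) with hD
      -- helper: a bad conj χ with singleton vars {q} forces ∃ p ∈ ψ.vars, p ≠ q
      have hsing : ∀ χ ∈ Θ, IsConjVars χ → ¬ Entails ψ χ → ∀ q, χ.vars = {q} →
          ∃ p ∈ ψ.vars, p ≠ q := by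
        intro χ hχ hcχ hn q hqs
        by_contra hcon
        push_neg at hcon
        apply hn
        intro v hv
        rw [eval_disjVars hd] at hv
        obtain ⟨p, hp, hvp⟩ := hv
        rw [eval_conjVars hcχ, hqs]
        intro r hr
        simp only [Finset.mem_singleton] at hr
        subst hr
        have := hcon p hp
        subst this
        exact hvp
      -- comparability of two bad singleton conjs forces equal singleton
      have huniq : ∀ χ₁ ∈ Θ, ∀ χ₂ ∈ Θ, IsConjVars χ₁ → IsConjVars χ₂ →
          ∀ q₁ q₂, χ₁.vars = {q₁} → χ₂.vars = {q₂} → q₁ = q₂ := by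
        intro χ₁ hχ₁ χ₂ hχ₂ hc1 hc2 q₁ q₂ hs1 hs2
        rcases hchain χ₁ hχ₁ χ₂ hχ₂ with h | h
        · have h1 : eval (fun r => decide (r = q₁)) χ₁ = true := by
            rw [eval_conjVars hc1, hs1]; intro r hr
            simp only [Finset.mem_singleton] at hr; simp [hr]
          have h2 := h _ h1
          rw [eval_conjVars hc2, hs2] at h2
          have := h2 q₂ (by simp)
          simpa [eq_comm] using this
        · have h1 : eval (fun r => decide (r = q₂)) χ₂ = true := by
            rw [eval_conjVars hc2, hs2]; intro r hr
            simp only [Finset.mem_singleton] at hr; simp [hr]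
          have h2 := h _ h1
          rw [eval_conjVars hc1, hs1] at h2
          have := h2 q₁ (by simp)
          simpa using this
      rcases D.eq_empty_or_nonempty with hDe | hDne
      · -- no bad disjunctions
        have hnodisj : ∀ χ ∈ Θ, IsDisjVars χ → ¬ Entails ψ χ → False := by
          intro χ hχ h1 h2
          have : χ ∈ D := by rw [hD]; simp [Finset.mem_filter, hχ, h1, h2]
          rw [hDe] at this; simp at this
        by_cases hq : ∃ q, ∃ χ ∈ Θ, IsConjVars χ ∧ ¬ Entails ψ χ ∧ χ.vars = {q}
        · obtain ⟨q, χ₀, hχ₀, hc0, hn0, hs0⟩ := hq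
          obtain ⟨p, hp, hpq⟩ := hsing χ₀ hχ₀ hc0 hn0 q hs0
          refine ⟨p, hp, fun χ hχ h1 h2 => (hnodisj χ hχ h1 h2).elim, ?_⟩
          intro χ hχ hcχ hnχ hsχ
          exact hpq (huniq χ hχ χ₀ hχ₀ hcχ hc0 p q hsχ hs0)
        · obtain ⟨p, hp⟩ := vars_nonempty_of_disj hd
          refine ⟨p, hp, fun χ hχ h1 h2 => (hnodisj χ hχ h1 h2).elim, ?_⟩
          intro χ hχ hcχ hnχ hsχ
          exact hq ⟨p, χ, hχ, hcχ, hnχ, hsχ⟩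
      · -- D nonempty: take max-vars element
        obtain ⟨χs, hχsD, hmax⟩ := D.exists_max_image (fun χ => χ.vars.card) hDne
        rw [hD, Finset.mem_filter] at hχsD
        obtain ⟨hχsΘ, hds, hns⟩ := hχsD
        have hsub : ∀ χ ∈ D, χ.vars ⊆ χs.vars := by
          intro χ hχD
          have hχD' := hχD
          rw [hD, Finset.mem_filter] at hχD'
          obtain ⟨hχΘ, hdχ, hnχ⟩ := hχD'
          rcases hchain χ hχΘ χs hχsΘ with h | h
          · exact disj_entails_disj hdχ hds h
          · have h1 := disj_entails_disj hds hdχ h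
            have h2 := hmax χ hχD
            have := Finset.eq_of_subset_of_card_le h1 h2
            rw [this]
          
        have hPnsub : ¬ ψ.vars ⊆ χs.vars := fun h => hns (disj_entails_disj_of_subset hd hds h)
        obtain ⟨p, hp, hpns⟩ := Finset.not_subset.mp hPnsub
        refine ⟨p, hp, ?_, ?_⟩
        · intro χ hχ h1 h2 hpv
          have : χ ∈ D := by rw [hD]; simp [Finset.mem_filter, hχ, h1, h2]
          exact hpns (hsub χ this hpv)
        · intro χ hχ hcχ hnχ hsχ
          rcases hchain χ hχ χs hχsΘ with h | h
          · have h1 : eval (fun r => decide (r = p)) χ = true := by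
              rw [eval_conjVars hcχ, hsχ]; intro r hr
              simp only [Finset.mem_singleton] at hr; simp [hr]
            have h2 := h _ h1
            rw [eval_disjVars hds] at h2
            obtain ⟨q, hq, hqv⟩ := h2
            simp only [decide_eq_true_eq] at hqv
            exact hpns (hqv ▸ hq)
          · obtain ⟨q₀, hq₀⟩ := vars_nonempty_of_disj hds
            have h1 : eval (fun r => decide (r = q₀)) χs = true := by
              rw [eval_disjVars hds]; exact ⟨q₀, hq₀, by simp⟩
            have h2 := h _ h1
            rw [eval_conjVars hcχ, hsχ] at h2
            have := h2 p (by simp)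
            simp only [decide_eq_true_eq] at this
            subst this
            exact hpns hq₀
    obtain ⟨p, hp, hdisjclaim, hconjclaim⟩ := key
    refine ⟨{p}, ?_, ?_, ?_⟩
    · intro q hq
      simp only [Finset.mem_singleton] at hq
      subst hq
      exact (Finset.le_sup hψ : CPL.vars ψ ⊆ Θ.sup CPL.vars) hp
    · rw [evalSet, eval_disjVars hd]
      exact ⟨p, hp, by simp⟩
    · intro χ hχ hn
      rw [evalSet_false_iff]
      rcases hform χ hχ with hcχ | hdχ
      · rw [evalSet, eval_conjVars hcχ]
        intro hall
        apply hconjclaim χ hχ hcχ hn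
        apply Finset.eq_singleton_iff_nonempty_unique_mem.mpr
        refine ⟨vars_nonempty_of_conj hcχ, ?_⟩
        intro q hq
        have := hall q hq
        simpa using this
      · rw [evalSet, eval_disjVars hdχ]
        rintro ⟨q, hq, hqv⟩
        simp only [Finset.mem_singleton, decide_eq_true_eq] at hqv
        subst hqv
        exact hdisjclaim χ hχ hdχ hn hq

end CPL
namespace CPL

lemma exists_min_of_chain : ∀ (U : Finset CPL),
    (∀ φ ∈ U, ∀ χ ∈ U, Entails φ χ ∨ Entails χ φ) → U.Nonempty →
    ∃ ψ ∈ U, ∀ χ ∈ U, Entails ψ χ := by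
  classical
  intro U
  induction U using Finset.induction_on with
  | empty => intro _ hne; exact absurd hne (by simp)
  | @insert a s ha ih =>
      intro htot hne
      rcases s.eq_empty_or_nonempty with hs | hs
      · subst hs
        refine ⟨a, by simp, ?_⟩
        intro χ hχ
        simp only [Finset.mem_insert] at hχ
        rcases hχ with rfl | h
        · exact Entails.refl _
        · simp at h
      · obtain ⟨ψ, hψs, hψmin⟩ := ih
          (fun φ hφ χ hχ => htot φ (by simp [hφ]) χ (by simp [hχ])) hs
        rcases htot a (by simp) ψ (by simp [hψs]) with h | h
        · refine ⟨a, by simp, ?_⟩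
          intro χ hχ
          simp only [Finset.mem_insert] at hχ
          rcases hχ with rfl | hχ
          · exact Entails.refl _
          · exact h.trans (hψmin χ hχ)
        · refine ⟨ψ, by simp [hψs], ?_⟩
          intro χ hχ
          simp only [Finset.mem_insert] at hχ
          rcases hχ with rfl | hχ
          · exact h
          · exact hψmin χ hχ

/-- Lemma A: realize exactly an up-closed subset of a chain. -/
lemma exists_world_upset (Θ : Finset CPL) (hform : ∀ φ ∈ Θ, IsConjVars φ ∨ IsDisjVars φ)
    (hchain : ∀ φ ∈ Θ, ∀ χ ∈ Θ, Entails φ χ ∨ Entails χ φ)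
    (U : Finset CPL) (hU : U ⊆ Θ)
    (hup : ∀ φ ∈ U, ∀ χ ∈ Θ, Entails φ χ → χ ∈ U) :
    ∃ w : Finset ℕ, w ⊆ Θ.sup CPL.vars ∧ ∀ φ ∈ Θ, (evalSet w φ = true ↔ φ ∈ U) := by
  rcases U.eq_empty_or_nonempty with hUe | hUne
  · refine ⟨∅, by simp, ?_⟩
    intro φ hφ
    subst hUe
    simp only [Finset.notMem_empty, iff_false]
    rcases hform φ hφ with hc | hd
    · rw [evalSet, eval_conjVars hc]
      intro hall
      obtain ⟨p, hp⟩ := vars_nonempty_of_conj hc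
      have := hall p hp
      simp at this
    · rw [evalSet, eval_disjVars hd]
      rintro ⟨p, hp, hv⟩
      simp at hv
  · obtain ⟨ψ, hψU, hψmin⟩ := exists_min_of_chain U
      (fun φ hφ χ hχ => hchain φ (hU hφ) χ (hU hχ)) hUne
    obtain ⟨w, hwsub, hwψ, hwbad⟩ := exists_world_min Θ hform hchain ψ (hU hψU)
    refine ⟨w, hwsub, ?_⟩
    intro φ hφ
    constructor
    · intro hev
      by_contra hφU
      have hn : ¬ Entails ψ φ := fun h => hφU (hup ψ hψU φ hφ h)
      have := hwbad φ hφ hn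
      rw [this] at hev
      exact absurd hev (by simp)
    · intro hφU
      exact hψmin φ hφU _ hwψ

end CPL
lemma FP.events_vars : ∀ (γ : FP), ∀ φ ∈ γ.events, φ.vars ⊆ γ.vars := by
  intro γ
  induction γ with
  | prob ψ => intro φ hφ; simp only [FP.events, Finset.mem_singleton] at hφ; subst hφ; simp [FP.vars]
  | probIneq ψ d c => intro φ hφ; simp only [FP.events, Finset.mem_singleton] at hφ; subst hφ; simp [FP.vars]
  | neg α ih => exact ih
  | delta α ih => exact ih
  | conj α β ih1 ih2 =>
      intro φ hφ
      simp only [FP.events, Finset.mem_union] at hφ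
      rcases hφ with h | h
      · exact (ih1 φ h).trans (by simp [FP.vars, Finset.subset_union_left])
      · exact (ih2 φ h).trans (by simp [FP.vars, Finset.subset_union_right])
  | disj α β ih1 ih2 =>
      intro φ hφ
      simp only [FP.events, Finset.mem_union] at hφ
      rcases hφ with h | h
      · exact (ih1 φ h).trans (by simp [FP.vars, Finset.subset_union_left])
      · exact (ih2 φ h).trans (by simp [FP.vars, Finset.subset_union_right])
  | impl α β ih1 ih2 =>
      intro φ hφ
      simp only [FP.events, Finset.mem_union] at hφ
      rcases hφ with h | h
      · exact (ih1 φ h).trans (by simp [FP.vars, Finset.subset_union_left])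
      · exact (ih2 φ h).trans (by simp [FP.vars, Finset.subset_union_right])

lemma interp_eq_eval {V : Finset ℕ} (M : ProbModel V) (val : LukVal) (e : CPL → ℕ) :
    ∀ (α : FP), (∀ φ ∈ α.events, M.μ (truthSet V φ) = val.v (e φ)) →
    FP.interp M α = val.eval (FP.outer e α) := by
  intro α
  induction α with
  | prob φ => intro h; simp only [FP.interp, FP.outer, LukVal.eval]; exact h φ (by simp [FP.events])
  | probIneq φ d c =>
      intro h
      simp only [FP.interp, FP.outer, LukVal.eval]
      rw [h φ (by simp [FP.events])]
  | neg α ih => intro h; simp only [FP.interp, FP.outer, LukVal.eval]; rw [ih h]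
  | delta α ih => intro h; simp only [FP.interp, FP.outer, LukVal.eval]; rw [ih h]
  | conj α β ih1 ih2 =>
      intro h
      simp only [FP.interp, FP.outer, LukVal.eval]
      rw [ih1 (fun φ hφ => h φ (by simp [FP.events, hφ])),
          ih2 (fun φ hφ => h φ (by simp [FP.events, hφ]))]
  | disj α β ih1 ih2 =>
      intro h
      simp only [FP.interp, FP.outer, LukVal.eval]
      rw [ih1 (fun φ hφ => h φ (by simp [FP.events, hφ])),
          ih2 (fun φ hφ => h φ (by simp [FP.events, hφ]))]
  | impl α β ih1 ih2 =>
      intro h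
      simp only [FP.interp, FP.outer, LukVal.eval]
      rw [ih1 (fun φ hφ => h φ (by simp [FP.events, hφ])),
          ih2 (fun φ hφ => h φ (by simp [FP.events, hφ]))]

lemma ProbModel.mono {V : Finset ℕ} (M : ProbModel V) {A B : Set (World V)} (h : A ⊆ B) :
    M.μ A ≤ M.μ B := by
  have hadd := M.m_add A (B \ A) (Set.disjoint_sdiff_right.mono_left le_rfl)
  rw [Set.union_diff_cancel h] at hadd
  have := M.nonneg (B \ A)
  linarith

lemma truthSet_mono {V : Finset ℕ} {φ χ : CPL} (h : CPL.Entails φ χ) :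
    truthSet V φ ⊆ truthSet V χ := fun w hw => h _ hw

lemma exists_global_world
    (n : ℕ) (Θ : Fin n → Finset CPL) (E : Finset CPL) (hcover : Finset.univ.sup Θ = E)
    (hform : ∀ φ ∈ E, CPL.IsConjVars φ ∨ CPL.IsDisjVars φ)
    (hchain : ∀ i, ∀ φ ∈ Θ i, ∀ χ ∈ Θ i, CPL.Entails φ χ ∨ CPL.Entails χ φ)
    (hdisj : ∀ i j, i ≠ j → Disjoint ((Θ i).sup CPL.vars) ((Θ j).sup CPL.vars))
    (F : Finset CPL) (hFE : F ⊆ E)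
    (hup : ∀ φ ∈ F, ∀ i, φ ∈ Θ i → ∀ χ ∈ Θ i, CPL.Entails φ χ → χ ∈ F) :
    ∃ w : Finset ℕ, w ⊆ E.sup CPL.vars ∧ ∀ φ ∈ E, (CPL.evalSet w φ = true ↔ φ ∈ F) := by
  classical
  have hΘE : ∀ i, Θ i ⊆ E := by
    intro i
    rw [← hcover]
    show Θ i ≤ Finset.univ.sup Θ
    exact Finset.le_sup (Finset.mem_univ i)
  have hex : ∀ i : Fin n, ∃ w : Finset ℕ, w ⊆ (Θ i).sup CPL.vars ∧
      ∀ φ ∈ Θ i, (CPL.evalSet w φ = true ↔ φ ∈ F ∩ Θ i) := by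
    intro i
    apply CPL.exists_world_upset (Θ i) (fun φ hφ => hform φ (hΘE i hφ)) (hchain i)
      (F ∩ Θ i) Finset.inter_subset_right
    intro φ hφ χ hχ hent
    rw [Finset.mem_inter] at hφ ⊢
    exact ⟨hup φ hφ.1 i hφ.2 χ hχ hent, hχ⟩
  choose wi hwi1 hwi2 using hex
  refine ⟨Finset.univ.sup wi, ?_, ?_⟩
  · show Finset.univ.sup wi ≤ E.sup CPL.vars
    apply Finset.sup_le
    intro i _
    refine le_trans (hwi1 i : wi i ≤ (Θ i).sup CPL.vars) ?_
    apply Finset.sup_le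
    intro φ hφ
    exact Finset.le_sup (hΘE i hφ)
  · intro φ hφ
    have hφΘ : ∃ i, φ ∈ Θ i := by
      rw [← hcover] at hφ
      obtain ⟨i, _, hi⟩ := Finset.mem_sup.mp hφ
      exact ⟨i, hi⟩
    obtain ⟨i₀, hφi⟩ := hφΘ
    have hvars : φ.vars ⊆ (Θ i₀).sup CPL.vars := Finset.le_sup (f := CPL.vars) hφi
    have heq : CPL.evalSet (Finset.univ.sup wi) φ = CPL.evalSet (wi i₀) φ := by
      apply CPL.eval_congr
      intro p hp
      apply decide_eq_decide.mpr
      constructor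
      · intro hpw
        obtain ⟨j, _, hpj⟩ := Finset.mem_sup.mp hpw
        by_cases hji : j = i₀
        · exact hji ▸ hpj
        · exact absurd (hvars hp)
            (Finset.disjoint_left.mp (hdisj j i₀ hji) (hwi1 j hpj))
      · intro hpw
        exact Finset.mem_sup.mpr ⟨i₀, Finset.mem_univ i₀, hpw⟩
    rw [heq, hwi2 i₀ φ hφi, Finset.mem_inter]
    simp [hφi]
open MeasureTheory in
open scoped ENNReal in
lemma exists_coherent_model (V : Finset ℕ) (E : Finset CPL) (x : CPL → ℝ)
    (hx0 : ∀ φ ∈ E, 0 ≤ x φ) (hx1 : ∀ φ ∈ E, x φ ≤ 1)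
    (hreal : ∀ t : ℝ, ∃ w : Finset ℕ, w ⊆ V ∧
      ∀ φ ∈ E, (CPL.evalSet w φ = true ↔ t < x φ)) :
    ∃ M : ProbModel V, ∀ φ ∈ E, M.μ (truthSet V φ) = x φ := by
  classical
  set S : ℝ → Finset CPL := fun t => E.filter (fun φ => t < x φ) with hSdef
  set g : Finset CPL → World V := fun F =>
    if h : ∃ w : Finset ℕ, w ⊆ V ∧ ∀ φ ∈ E, (CPL.evalSet w φ = true ↔ φ ∈ F) then
      ⟨h.choose, h.choose_spec.1⟩ else ⟨∅, by simp⟩ with hgdef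
  have hgS : ∀ t : ℝ, ∀ φ ∈ E, (CPL.evalSet (g (S t)).1 φ = true ↔ φ ∈ S t) := by
    intro t
    obtain ⟨w, hw1, hw2⟩ := hreal t
    have hex : ∃ w : Finset ℕ, w ⊆ V ∧ ∀ φ ∈ E, (CPL.evalSet w φ = true ↔ φ ∈ S t) :=
      ⟨w, hw1, fun φ hφ => by rw [hw2 φ hφ]; simp [hSdef, Finset.mem_filter, hφ]⟩
    intro φ hφ
    rw [hgdef]
    simp only [dif_pos hex]
    exact hex.choose_spec.2 φ hφ
  -- measurability of sets factoring through S
  have hmeas : ∀ (Q : Finset CPL → Prop), MeasurableSet {t : ℝ | Q (S t)} := by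
    intro Q
    have hrw : {t : ℝ | Q (S t)} = ⋃ F ∈ E.powerset.filter Q, {t : ℝ | S t = F} := by
      ext t
      simp only [Set.mem_setOf_eq, Set.mem_iUnion, Finset.mem_filter, Finset.mem_powerset]
      constructor
      · intro h
        exact ⟨S t, ⟨⟨Finset.filter_subset _ _, h⟩, rfl⟩⟩
      · rintro ⟨F, ⟨⟨hFE, hQF⟩, hSt⟩⟩
        rw [hSt]
        exact hQF
    rw [hrw]
    apply Set.Finite.measurableSet_biUnion (Finset.finite_toSet _)
    intro F hF
    rw [Finset.mem_coe, Finset.mem_filter, Finset.mem_powerset] at hF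
    have hrw2 : {t : ℝ | S t = F} =
        ⋂ φ ∈ E, (if φ ∈ F then Set.Iio (x φ) else Set.Ici (x φ)) := by
      ext t
      simp only [Set.mem_setOf_eq, Set.mem_iInter]
      constructor
      · intro h φ hφ
        by_cases hφF : φ ∈ F
        · simp only [if_pos hφF, Set.mem_Iio]
          have : φ ∈ S t := h ▸ hφF
          rw [hSdef] at this
          simp only [Finset.mem_filter] at this
          exact this.2
        · simp only [if_neg hφF, Set.mem_Ici]
          by_contra hlt
          push_neg at hlt
          exact hφF (h ▸ (by rw [hSdef]; simp [Finset.mem_filter, hφ, hlt] : φ ∈ S t))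
      · intro h
        apply Finset.ext
        intro φ
        constructor
        · intro hφS
          rw [hSdef] at hφS
          simp only [Finset.mem_filter] at hφS
          have := h φ hφS.1
          by_contra hφF
          simp only [if_neg hφF, Set.mem_Ici] at this
          exact absurd hφS.2 (not_lt.mpr this)
        · intro hφF
          have hφE := hF.1 hφF
          have := h φ hφE
          simp only [if_pos hφF, Set.mem_Iio] at this
          rw [hSdef]
          simp [Finset.mem_filter, hφE, this]
    rw [hrw2]
    apply Set.Finite.measurableSet_biInter (Finset.finite_toSet _)
    intro φ _
    split
    · exact measurableSet_Iio
    · exact measurableSet_Ici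
  have hPmeas : ∀ A : Set (World V),
      MeasurableSet {t : ℝ | t ∈ Set.Ioo (0:ℝ) 1 ∧ g (S t) ∈ A} := by
    intro A
    have : {t : ℝ | t ∈ Set.Ioo (0:ℝ) 1 ∧ g (S t) ∈ A} =
        Set.Ioo (0:ℝ) 1 ∩ {t : ℝ | (fun F => g F ∈ A) (S t)} := by
      ext t; simp [Set.mem_setOf_eq, Set.mem_inter_iff]
    rw [this]
    exact measurableSet_Ioo.inter (hmeas (fun F => g F ∈ A))
  have hfin : ∀ A : Set (World V),
      volume {t : ℝ | t ∈ Set.Ioo (0:ℝ) 1 ∧ g (S t) ∈ A} ≤ 1 := by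
    intro A
    calc volume {t : ℝ | t ∈ Set.Ioo (0:ℝ) 1 ∧ g (S t) ∈ A}
        ≤ volume (Set.Ioo (0:ℝ) 1) := measure_mono (fun t ht => ht.1)
      _ = 1 := by simp [Real.volume_Ioo]
  have hnetop : ∀ A : Set (World V),
      volume {t : ℝ | t ∈ Set.Ioo (0:ℝ) 1 ∧ g (S t) ∈ A} ≠ ⊤ :=
    fun A => ((hfin A).trans_lt ENNReal.one_lt_top).ne
  refine ⟨⟨fun A => (volume {t : ℝ | t ∈ Set.Ioo (0:ℝ) 1 ∧ g (S t) ∈ A}).toReal,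
    fun A => ENNReal.toReal_nonneg, ?_, ?_, ?_, ?_⟩, ?_⟩
  · intro A
    have := hfin A
    calc (volume {t : ℝ | t ∈ Set.Ioo (0:ℝ) 1 ∧ g (S t) ∈ A}).toReal
        ≤ (1 : ℝ≥0∞).toReal := ENNReal.toReal_mono ENNReal.one_ne_top this
      _ = 1 := by simp
  · have : {t : ℝ | t ∈ Set.Ioo (0:ℝ) 1 ∧ g (S t) ∈ (Set.univ : Set (World V))} =
        Set.Ioo (0:ℝ) 1 := by
      ext t; simp
    show (volume {t : ℝ | t ∈ Set.Ioo (0:ℝ) 1 ∧ g (S t) ∈ (Set.univ : Set (World V))}).toReal = 1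
    rw [this]
    simp [Real.volume_Ioo]
  · have : {t : ℝ | t ∈ Set.Ioo (0:ℝ) 1 ∧ g (S t) ∈ (∅ : Set (World V))} = ∅ := by
      ext t; simp
    show (volume {t : ℝ | t ∈ Set.Ioo (0:ℝ) 1 ∧ g (S t) ∈ (∅ : Set (World V))}).toReal = 0
    rw [this]
    simp
  · intro A B hAB
    have hU : {t : ℝ | t ∈ Set.Ioo (0:ℝ) 1 ∧ g (S t) ∈ A ∪ B} =
        {t : ℝ | t ∈ Set.Ioo (0:ℝ) 1 ∧ g (S t) ∈ A} ∪
        {t : ℝ | t ∈ Set.Ioo (0:ℝ) 1 ∧ g (S t) ∈ B} := by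
      ext t
      simp only [Set.mem_setOf_eq, Set.mem_union, Set.mem_inter_iff]
      tauto
    have hdisj2 : Disjoint {t : ℝ | t ∈ Set.Ioo (0:ℝ) 1 ∧ g (S t) ∈ A}
        {t : ℝ | t ∈ Set.Ioo (0:ℝ) 1 ∧ g (S t) ∈ B} := by
      rw [Set.disjoint_left]
      rintro t ⟨_, htA⟩ ⟨_, htB⟩
      exact Set.disjoint_left.mp hAB htA htB
    show (volume {t : ℝ | t ∈ Set.Ioo (0:ℝ) 1 ∧ g (S t) ∈ A ∪ B}).toReal =
      (volume {t : ℝ | t ∈ Set.Ioo (0:ℝ) 1 ∧ g (S t) ∈ A}).toReal +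
      (volume {t : ℝ | t ∈ Set.Ioo (0:ℝ) 1 ∧ g (S t) ∈ B}).toReal
    rw [hU, measure_union hdisj2 (hPmeas B)]
    exact ENNReal.toReal_add (hnetop A) (hnetop B)
  · intro φ hφ
    have hset : {t : ℝ | t ∈ Set.Ioo (0:ℝ) 1 ∧ g (S t) ∈ truthSet V φ} =
        Set.Ioo 0 (x φ) := by
      ext t
      simp only [Set.mem_setOf_eq, Set.mem_Ioo, truthSet]
      constructor
      · rintro ⟨⟨ht0, ht1⟩, htφ⟩
        refine ⟨ht0, ?_⟩
        have := (hgS t φ hφ).mp htφ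
        rw [hSdef] at this
        simp only [Finset.mem_filter] at this
        exact this.2
      · rintro ⟨ht0, htx⟩
        have ht1 : t < 1 := lt_of_lt_of_le htx (hx1 φ hφ)
        refine ⟨⟨ht0, ht1⟩, ?_⟩
        show CPL.evalSet (g (S t)).1 φ = true
        rw [hgS t φ hφ, hSdef]
        simp [Finset.mem_filter, hφ, htx]
    show (volume {t : ℝ | t ∈ Set.Ioo (0:ℝ) 1 ∧ g (S t) ∈ truthSet V φ}).toReal = x φ
    rw [hset]
    rw [Real.volume_Ioo]
    simp [ENNReal.toReal_ofReal (hx0 φ hφ)]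
/-- For a finite chained inner-positive `Γ ⊆ L^Q_Pr`, the Łukasiewicz
theory `Ψ_Γ = Γ^↑ ∪ {p_φ → p_χ : φ, χ ∈ E[Γ], φ ⊨_CPL χ}` is Ł-satisfiable iff `Γ` is
FP-satisfiable. -/
theorem stmt8 (Γ : Finset FP) (hWF : ∀ γ ∈ Γ, γ.WF)
    (n : ℕ) (Θ : Fin n → Finset CPL)
    (hcover : Finset.univ.sup Θ = Γ.sup FP.events)
    (hform : ∀ φ ∈ Γ.sup FP.events, CPL.IsConjVars φ ∨ CPL.IsDisjVars φ)
    (hchain : ∀ i, ∀ φ ∈ Θ i, ∀ χ ∈ Θ i, CPL.Entails φ χ ∨ CPL.Entails χ φ)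
    (hdisj : ∀ i j, i ≠ j → Disjoint ((Θ i).sup CPL.vars) ((Θ j).sup CPL.vars))
    (e : CPL → ℕ)
    (hinj : Set.InjOn e (↑(Γ.sup FP.events) : Set CPL))
    (hfresh : ∀ φ ∈ Γ.sup FP.events, e φ ∉ FP.varsSet Γ) :
    Luk.SatisfiableSet (PsiGamma Γ e) ↔ FP.SetSatisfiable Γ := by
  classical
  set E : Finset CPL := Γ.sup FP.events with hEdef
  set V : Finset ℕ := FP.varsSet Γ with hVdef
  have hEvars : ∀ φ ∈ E, φ.vars ⊆ V := by
    intro φ hφ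
    rw [hEdef] at hφ
    obtain ⟨γ, hγ, hφγ⟩ := Finset.mem_sup.mp hφ
    refine (FP.events_vars γ φ hφγ).trans ?_
    rw [hVdef]
    exact Finset.le_sup (f := FP.vars) hγ
  have hΘE : ∀ i, Θ i ⊆ E := by
    intro i
    have h : Θ i ≤ Finset.univ.sup Θ := Finset.le_sup (Finset.mem_univ i)
    rw [hcover] at h
    exact h
  constructor
  · -- Ł-satisfiable → FP-satisfiable
    rintro ⟨val, hval⟩
    set x : CPL → ℝ := fun φ => val.v (e φ) with hxdef
    have hx0 : ∀ φ ∈ E, 0 ≤ x φ := fun φ _ => (val.mem (e φ)).1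
    have hx1 : ∀ φ ∈ E, x φ ≤ 1 := fun φ _ => (val.mem (e φ)).2
    have hmono : ∀ φ ∈ E, ∀ χ ∈ E, CPL.Entails φ χ → x φ ≤ x χ := by
      intro φ hφ χ hχ hent
      have hmem : Luk.impl (.var (e φ)) (.var (e χ)) ∈ PsiGamma Γ e :=
        Or.inr ⟨φ, hφ, χ, hχ, hent, rfl⟩
      have h1 := hval _ hmem
      simp only [LukVal.eval] at h1
      have h2 : (1:ℝ) ≤ 1 - val.v (e φ) + val.v (e χ) := min_eq_left_iff.mp h1
      rw [hxdef]
      simp only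
      linarith
    have hreal : ∀ t : ℝ, ∃ w : Finset ℕ, w ⊆ V ∧
        ∀ φ ∈ E, (CPL.evalSet w φ = true ↔ t < x φ) := by
      intro t
      have hup : ∀ φ ∈ E.filter (fun φ => t < x φ), ∀ i, φ ∈ Θ i → ∀ χ ∈ Θ i,
          CPL.Entails φ χ → χ ∈ E.filter (fun φ => t < x φ) := by
        intro φ hφ i hφi χ hχi hent
        rw [Finset.mem_filter] at hφ ⊢
        refine ⟨hΘE i hχi, lt_of_lt_of_le hφ.2 ?_⟩
        exact hmono φ hφ.1 χ (hΘE i hχi) hent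
      obtain ⟨w, hw1, hw2⟩ := exists_global_world n Θ E hcover hform hchain hdisj
        (E.filter (fun φ => t < x φ)) (Finset.filter_subset _ _) hup
      refine ⟨w, ?_, ?_⟩
      · refine hw1.trans ?_
        show E.sup CPL.vars ≤ V
        exact Finset.sup_le hEvars
      · intro φ hφ
        rw [hw2 φ hφ]
        simp [Finset.mem_filter, hφ]
    obtain ⟨M, hM⟩ := exists_coherent_model V E x hx0 hx1 hreal
    refine ⟨M, ?_⟩
    intro γ hγ
    rw [interp_eq_eval M val e γ ?_]
    · exact hval _ (Or.inl ⟨γ, hγ, rfl⟩)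
    · intro φ hφ
      have hφE : φ ∈ E := by
        rw [hEdef]
        exact Finset.le_sup (f := FP.events) hγ hφ
      exact hM φ hφE
  · -- FP-satisfiable → Ł-satisfiable
    rintro ⟨M, hM⟩
    refine ⟨⟨fun m => if h : ∃ φ, φ ∈ E ∧ e φ = m then
        M.μ (truthSet V h.choose) else 0, ?_⟩, ?_⟩
    · intro p
      split
      · exact ⟨M.nonneg _, M.le_one _⟩
      · simp
    · set val : LukVal := ⟨fun m => if h : ∃ φ, φ ∈ E ∧ e φ = m then
        M.μ (truthSet V h.choose) else 0, by
          intro p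
          split
          · exact ⟨M.nonneg _, M.le_one _⟩
          · simp⟩ with hvaldef
      show ∀ ψ ∈ PsiGamma Γ e, val.eval ψ = 1
      have hve : ∀ φ ∈ E, val.v (e φ) = M.μ (truthSet V φ) := by
        intro φ hφ
        have hex : ∃ φ', φ' ∈ E ∧ e φ' = e φ := ⟨φ, hφ, rfl⟩
        rw [hvaldef]
        show (if h : ∃ φ', φ' ∈ E ∧ e φ' = e φ then
            M.μ (truthSet V h.choose) else 0) = M.μ (truthSet V φ)
        rw [dif_pos hex]
        have hch := hex.choose_spec
        have : hex.choose = φ := hinj (by exact_mod_cast hch.1) (by exact_mod_cast hφ) hch.2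
        rw [this]
      rintro ψ (⟨γ, hγ, rfl⟩ | ⟨φ, hφ, χ, hχ, hent, rfl⟩)
      · rw [← interp_eq_eval M val e γ ?_]
        · exact hM γ hγ
        · intro φ hφ
          have hφE : φ ∈ E := by
            rw [hEdef]
            exact Finset.le_sup (f := FP.events) hγ hφ
          exact (hve φ hφE).symm
      · have hle : val.v (e φ) ≤ val.v (e χ) := by
          rw [hve φ hφ, hve χ hχ]
          exact M.mono (truthSet_mono hent)
        show min 1 (1 - val.v (e φ) + val.v (e χ)) = 1
        exact min_eq_left (by linarith)
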